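/- arXiv:math/9811064 — 9 statements merged into one kernel-verified Lean document; each statement's English description precedes it below -/
import Mathlib

section
/- Let A be a unital ring, let h be a central element of A (e.g. A an associative unital ℝ-algebra and h the image of a real scalar), and let J, S, S' ∈ A satisfy J*S = S*J, S*S = 1 + h^2*(J*J), and S*S' = 1 = S'*S. Then the element g := 1 + h*(J*S) + h^2*(J*J) is invertible with two-sided inverse g' := 1 − h*(J*S'); that is, g*g' = 1 and g'*g = 1. -/
/-!
Put `x = h J`, which commutes with `S` because `h` is central. Since `S² = 1 + x²`, the two
elements factor as `g = S (S + x)` and `g' = S' (S - x)`; all four factors commute, so both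
products reduce to `(S + x)(S - x) = S² - x² = 1`.
-/

section

variable {A : Type*} [Ring A] {x s s' : A}

theorem one_add_mul_add_mul_self_eq_mul_add (hxs : Commute x s) (hs : s * s = 1 + x * x) :
    1 + x * s + x * x = s * (s + x) := by
  rw [mul_add, hs, ← hxs.eq]
  abel

theorem one_sub_mul_eq_mul_sub (hxs' : Commute x s') (hs's : s' * s = 1) :
    1 - x * s' = s' * (s - x) := by
  rw [mul_sub, hs's, hxs'.eq]

theorem one_add_mul_add_mul_self_mul_one_sub_mul (hxs : Commute x s) (hs : s * s = 1 + x * x)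
    (hss' : s * s' = 1) (hs's : s' * s = 1) :
    (1 + x * s + x * x) * (1 - x * s') = 1 ∧ (1 - x * s') * (1 + x * s + x * x) = 1 := by
  have hxs' : Commute x s' := Commute.units_inv_right (u := ⟨s, s', hss', hs's⟩) hxs
  have hss'_comm : Commute s s' := hss'.trans hs's.symm
  have hsq : (s + x) * (s - x) = 1 ∧ (s - x) * (s + x) = 1 := by
    rw [← hxs.symm.mul_self_sub_mul_self_eq, ← hxs.symm.mul_self_sub_mul_self_eq', hs,
      add_sub_cancel_right]
    exact ⟨rfl, rfl⟩
  rw [one_add_mul_add_mul_self_eq_mul_add hxs hs, one_sub_mul_eq_mul_sub hxs' hs's]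
  constructor
  · calc s * (s + x) * (s' * (s - x)) = s * s' * ((s + x) * (s - x)) := by
          rw [mul_assoc, ← mul_assoc (s + x), (hss'_comm.add_left hxs').eq, mul_assoc,
            ← mul_assoc s]
      _ = 1 := by rw [hss', hsq.1, one_mul]
  · calc s' * (s - x) * (s * (s + x)) = s' * s * ((s - x) * (s + x)) := by
          rw [mul_assoc, ← mul_assoc (s - x), ((Commute.refl s).sub_left hxs).eq,
            mul_assoc, ← mul_assoc s']
      _ = 1 := by rw [hs's, hsq.2, one_mul]

end

/-- The transforming operator `g = 1 + hJ₊(1+h²J₊²)^{1/2} + h²J₊²` has two-sided inverse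
`g⁻¹ = 1 − hJ₊(1+h²J₊²)^{−1/2}`, in any unital ring, where `S` plays the role of the
square root `(1+h²J₊²)^{1/2}` and `S'` its inverse. -/
theorem twist_operator_g_invertible {A : Type*} [Ring A] (h J S S' : A)
    (hcentral : ∀ x : A, h * x = x * h)
    (hJS : J * S = S * J)
    (hS : S * S = 1 + h ^ 2 * (J * J))
    (hSS' : S * S' = 1) (hS'S : S' * S = 1) :
    (1 + h * (J * S) + h ^ 2 * (J * J)) * (1 - h * (J * S')) = 1 ∧
    (1 - h * (J * S')) * (1 + h * (J * S) + h ^ 2 * (J * J)) = 1 := by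
  have hsq : h ^ 2 * (J * J) = h * J * (h * J) := by
    rw [← pow_two J, ← (show Commute h J from hcentral J).mul_pow, pow_two]
  have hxS : Commute (h * J) S := (show Commute h S from hcentral S).mul_left hJS
  simp only [← mul_assoc h J, hsq] at hS ⊢
  exact one_add_mul_add_mul_self_mul_one_sub_mul hxS hS hSS' hS'S
end

section
/- Let h : ℝ and define the real 3×3 matrices X := ![![0,2,0], ![0,0,2], ![0,0,0]], Y := ![![0, h^2/2, 0], ![1, 0, −3h^2/2], ![0, 1, 0]], H := ![![2, 0, −4h^2], ![0, 0, 0], ![0, 0, −2]]. Then, with exp denoting the matrix exponential, the following hold: (i) h • (H*X − X*H) = exp(h•X) − exp(−h•X); (ii) X*Y − Y*X = H; (iii) 2 • (H*Y − Y*H) = −( Y*(exp(h•X)+exp(−h•X)) + (exp(h•X)+exp(−h•X))*Y ). -/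
/-!
The raising matrix `X` is nilpotent with `X ^ 3 = 0`, so its exponential series stops after the
quadratic term: `exp (t • X) = 1 + t • X + (t ^ 2 / 2) • X ^ 2` is an explicit unipotent matrix,
polynomial in `t`. After substituting it, each of the three relations is an identity between
3 × 3 matrices with polynomial entries in `h`, checked entry by entry.
-/

open scoped Nat in
theorem NormedSpace.exp_eq_sum_range_of_pow_eq_zero (𝕂 : Type*) {𝔸 : Type*} [Field 𝕂]
    [CharZero 𝕂] [Ring 𝔸] [Algebra 𝕂 𝔸] [TopologicalSpace 𝔸] [IsTopologicalRing 𝔸] {a : 𝔸}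
    {k : ℕ} (ha : a ^ k = 0) : exp a = ∑ n ∈ Finset.range k, (n !⁻¹ : 𝕂) • a ^ n := by
  rw [exp_eq_tsum 𝕂]
  exact tsum_eq_sum fun n hn => by
    rw [pow_eq_zero_of_le (by simpa using hn) ha, smul_zero]

theorem spinOne_raising_pow_three : !![(0 : ℝ), 2, 0; 0, 0, 2; 0, 0, 0] ^ 3 = 0 := by
  ext i j
  fin_cases i <;> fin_cases j <;> simp [pow_succ]

theorem exp_smul_spinOne_raising (t : ℝ) :
    NormedSpace.exp (t • !![(0 : ℝ), 2, 0; 0, 0, 2; 0, 0, 0]) =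
      !![1, 2 * t, 2 * t ^ 2; 0, 1, 2 * t; 0, 0, 1] := by
  have hcube : (t • !![(0 : ℝ), 2, 0; 0, 0, 2; 0, 0, 0]) ^ 3 = 0 := by
    rw [smul_pow, spinOne_raising_pow_three, smul_zero]
  rw [NormedSpace.exp_eq_sum_range_of_pow_eq_zero ℝ hcube]
  ext i j
  fin_cases i <;> fin_cases j <;> simp [Finset.sum_range_succ, pow_two] <;> ring

/-- The spin-1 (three-dimensional) representation matrices satisfy the defining relations of
the Jordanian quantum algebra U_h(sl(2)): `[H,X] = 2 sinh(hX)/h`,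
`[H,Y] = −Y cosh(hX) − cosh(hX) Y`, `[X,Y] = H`, multiplied through by `h` and `2`. -/
theorem jordanian_spin_one_representation (h : ℝ)
    (X : Matrix (Fin 3) (Fin 3) ℝ) (Y : Matrix (Fin 3) (Fin 3) ℝ)
    (H : Matrix (Fin 3) (Fin 3) ℝ)
    (hX : X = !![0, 2, 0; 0, 0, 2; 0, 0, 0])
    (hY : Y = !![0, h ^ 2 / 2, 0; 1, 0, -(3 * h ^ 2) / 2; 0, 1, 0])
    (hH : H = !![2, 0, -(4 * h ^ 2); 0, 0, 0; 0, 0, -2]) :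
    h • (H * X - X * H) = NormedSpace.exp (h • X) - NormedSpace.exp (-(h • X)) ∧
    X * Y - Y * X = H ∧
    (2 : ℝ) • (H * Y - Y * H) =
      -(Y * (NormedSpace.exp (h • X) + NormedSpace.exp (-(h • X))) +
        (NormedSpace.exp (h • X) + NormedSpace.exp (-(h • X))) * Y) := by
  subst hX hY hH
  rw [← neg_smul, exp_smul_spinOne_raising, exp_smul_spinOne_raising]
  refine ⟨?_, ?_, ?_⟩ <;>
  · ext i j
    fin_cases i <;> fin_cases j <;> simp <;> ring
end

section
/- Fix h : ℝ. For q : ℝ with q > 0 and q ≠ 1, define the 2×2 real matrix M(q) := ![![1, h/(q−1)], ![0,1]] and the 4×4 real matrix R_q(q) whose only nonzero entries, in the lexicographic basis of Fin 2 × Fin 2, are: diagonal entries (q^{1/2}, q^{−1/2}, q^{−1/2}, q^{1/2}) and the ((1,2),(2,1))-entry q^{−1/2}(q − q^{−1}). Then, as q tends to 1 within {q : ℝ | 0 < q ∧ q ≠ 1}, the matrix (M(q)⁻¹ ⊗ₖ M(q)⁻¹) * R_q(q) * (M(q) ⊗ₖ M(q)) (Kronecker products) tends to the 4×4 matrix R_h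 := ![![1, h, −h, h^2], ![0, 1, 0, h], ![0, 0, 1, −h], ![0, 0, 0, 1]]. -/
set_option maxHeartbeats 1000000


open Matrix Filter
open scoped Kronecker

/-- The fundamental representation of the contraction matrix `M = E_q(ηJ₊)`, `η = h/(q−1)`. -/
noncomputable def Mmat (h q : ℝ) : Matrix (Fin 2) (Fin 2) ℝ := !![1, h / (q - 1); 0, 1]

/-- Lexicographic identification of `Fin 2 × Fin 2` with `Fin 4`. -/
def lex22 (p : Fin 2 × Fin 2) : Fin 4 :=
  ⟨2 * p.1.val + p.2.val, by have := p.1.isLt; have := p.2.isLt; omega⟩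

/-- The matrix of the universal R-matrix of the standard q-deformed `U_q(sl(2))` in the
fundamental (spin-1/2 ⊗ spin-1/2) representation: diagonal entries
`(q^{1/2}, q^{−1/2}, q^{−1/2}, q^{1/2})` and `((1,2),(2,1))`-entry `q^{−1/2}(q − q⁻¹)`. -/
noncomputable def Rq (q : ℝ) : Matrix (Fin 2 × Fin 2) (Fin 2 × Fin 2) ℝ :=
  Matrix.of fun p r =>
    if p = r then (if p.1 = p.2 then q ^ ((1 : ℝ) / 2) else q ^ (-(1 : ℝ) / 2))
    else if p = ((0, 1) : Fin 2 × Fin 2) ∧ r = ((1, 0) : Fin 2 × Fin 2) then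
      q ^ (-(1 : ℝ) / 2) * (q - q⁻¹)
    else 0

/-- The fundamental representation of the Jordanian universal R-matrix `𝓡_h`. -/
noncomputable def Rh (h : ℝ) : Matrix (Fin 2 × Fin 2) (Fin 2 × Fin 2) ℝ :=
  Matrix.of fun p r =>
    !![1, h, -h, h ^ 2; 0, 1, 0, h; 0, 0, 1, -h; 0, 0, 0, 1] (lex22 p) (lex22 r)

noncomputable def Fmat (h q : ℝ) : Matrix (Fin 2 × Fin 2) (Fin 2 × Fin 2) ℝ :=
  Matrix.of fun p r =>
    !![q ^ ((1:ℝ)/2), h * q ^ (-(1:ℝ)/2), -(h * q ^ (-(3:ℝ)/2)), h^2 * q ^ (-(3:ℝ)/2);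
       0, q ^ (-(1:ℝ)/2), q ^ (-(1:ℝ)/2) * (q - q⁻¹), h * q ^ (-(3:ℝ)/2);
       0, 0, q ^ (-(1:ℝ)/2), -(h * q ^ (-(1:ℝ)/2));
       0, 0, 0, q ^ ((1:ℝ)/2)] (lex22 p) (lex22 r)

lemma Minv (h q : ℝ) : (Mmat h q)⁻¹ = !![1, -(h/(q-1)); 0, 1] := by
  apply Matrix.inv_eq_right_inv
  ext i j
  fin_cases i <;> fin_cases j <;> simp [Mmat, Matrix.mul_apply, Fin.sum_univ_two]

lemma prod_eq (h q : ℝ) (hq : 0 < q) (hq1 : q ≠ 1) :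
    ((Mmat h q)⁻¹ ⊗ₖ (Mmat h q)⁻¹) * Rq q * (Mmat h q ⊗ₖ Mmat h q) = Fmat h q := by
  have hq0 : q ≠ 0 := hq.ne'
  have hq1' : q - 1 ≠ 0 := sub_ne_zero.mpr hq1
  obtain ⟨s, hsval, hs0, hs2⟩ : ∃ s : ℝ, q ^ ((1:ℝ)/2) = s ∧ s ≠ 0 ∧ s * s = q :=
    ⟨q ^ ((1:ℝ)/2), rfl, (Real.rpow_pos_of_pos hq _).ne', by
      rw [← Real.rpow_add hq]; norm_num⟩
  have hb : q ^ (-(1:ℝ)/2) = s⁻¹ := by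
    rw [neg_div, Real.rpow_neg hq.le, hsval]
  have h32 : q ^ (-(3:ℝ)/2) = s⁻¹ * q⁻¹ := by
    rw [show (-(3:ℝ)/2) = (-(1:ℝ)/2) + (-1 : ℝ) by norm_num, Real.rpow_add hq, hb,
      Real.rpow_neg_one]
  have hq1s : s * s - 1 ≠ 0 := by rw [hs2]; exact hq1'
  have hs0' : (0:ℝ) < s := hsval ▸ Real.rpow_pos_of_pos hq _
  rw [Minv]
  ext p r
  fin_cases p <;> fin_cases r <;>
    simp [Mmat, Rq, Fmat, lex22, Matrix.mul_apply, Fintype.sum_prod_type, Fin.sum_univ_two,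
      Matrix.kroneckerMap_apply, Matrix.vecHead, Matrix.vecTail, Prod.ext_iff, Prod.fst_one, Prod.snd_one, Prod.fst_zero, Prod.snd_zero, hsval, hb, h32]
  all_goals rw [← hs2]
  all_goals field_simp
  all_goals try ring
  all_goals rw [show ((s:ℝ)^2)^((1:ℝ)/2) = s by
    rw [← Real.rpow_natCast s 2, ← Real.rpow_mul hs0'.le]; norm_num]
  all_goals ring
  all_goals have hA : (-1 + s ^ 2) ≠ 0 := by intro hc; apply hq1s; linear_combination hc
  all_goals have hB : (1 - s ^ 2 * 2 + s ^ 4) ≠ 0 := by intro hc; apply pow_ne_zero 2 hA; linear_combination hc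
  all_goals field_simp
  all_goals ring

/-- The contraction prescription `R̃_h = lim_{q→1} (M⁻¹⊗M⁻¹) R_q (M⊗M)` in the fundamental
representation `j₁ = j₂ = 1/2`. -/
theorem contraction_Rq_to_Rh (h : ℝ) :
    Tendsto
      (fun q : ℝ => ((Mmat h q)⁻¹ ⊗ₖ (Mmat h q)⁻¹) * Rq q * (Mmat h q ⊗ₖ Mmat h q))
      (nhdsWithin 1 {q : ℝ | 0 < q ∧ q ≠ 1}) (nhds (Rh h)) := by
  have hmem : ∀ᶠ q in nhdsWithin 1 {q : ℝ | 0 < q ∧ q ≠ 1},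
      ((Mmat h q)⁻¹ ⊗ₖ (Mmat h q)⁻¹) * Rq q * (Mmat h q ⊗ₖ Mmat h q) = Fmat h q :=
    eventually_nhdsWithin_of_forall (fun q hq => prod_eq h q hq.1 hq.2)
  rw [tendsto_congr' hmem]
  apply Tendsto.mono_left _ nhdsWithin_le_nhds
  have t1 : Tendsto (fun q : ℝ => q ^ ((1:ℝ)/2)) (nhds 1) (nhds 1) := by
    have := (Real.continuousAt_rpow_const 1 ((1:ℝ)/2) (Or.inl one_ne_zero)).tendsto
    simpa using this
  have t2 : Tendsto (fun q : ℝ => q ^ (-(1:ℝ)/2)) (nhds 1) (nhds 1) := by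
    have := (Real.continuousAt_rpow_const 1 (-(1:ℝ)/2) (Or.inl one_ne_zero)).tendsto
    simpa using this
  have t3 : Tendsto (fun q : ℝ => q ^ (-(3:ℝ)/2)) (nhds 1) (nhds 1) := by
    have := (Real.continuousAt_rpow_const 1 (-(3:ℝ)/2) (Or.inl one_ne_zero)).tendsto
    simpa using this
  have tinv : Tendsto (fun q : ℝ => q⁻¹) (nhds 1) (nhds 1) := by
    have := (continuousAt_inv₀ (one_ne_zero (α := ℝ))).tendsto
    simpa using this
  apply tendsto_pi_nhds.mpr; intro p
  rw [tendsto_pi_nhds]; intro r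
  fin_cases p <;> fin_cases r <;>
    simp [Fmat, Rh, lex22, Matrix.vecHead, Matrix.vecTail] <;>
    first
      | exact tendsto_const_nhds
      | exact t1
      | exact t2
      | (simpa using t1)
      | (simpa using t2)
      | (simpa using t3)
      | (simpa using tendsto_const_nhds.mul t2)
      | (simpa using (tendsto_const_nhds.mul t2).neg)
      | (simpa using tendsto_const_nhds.mul t3)
      | (simpa using (tendsto_const_nhds.mul t3).neg)
      | (have : Tendsto (fun q : ℝ => q ^ (-(1:ℝ)/2) * (q - q⁻¹)) (nhds 1) (nhds (1 * (1 - 1))) :=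
           t2.mul (tendsto_id.sub tinv)
         simpa using this)
end

section
/- Let h : ℝ. Define the real 3×3 matrices J := ![![0,2,0],![0,0,2],![0,0,0]], K := diagonal (2,0,−2), S := 1 + (h^2/2)•(J*J), T := h•J + S, T' := S − h•J, and H := S*K. Then T*T' = 1 = T'*T, and the following three matrix identities hold: (a) −2h•(T*H) = −h•((T*T + 1)*K); (b) −2h^2•( T*T − T'*T' + 2•((T*H)*(T'*T' − 1)) − (T*H)*(T*H)*(T'*T') ) = (h^2/2)•( (T+T')*(T+T')*(K*K) − 4•(T*T − T'*T') + 4•((T'*T' − 1)*K) ); (c) −2h•( (T*H)*(T'*T') − T'*T' + 1 ) = −h•( (T'*T' + 1)*K + 2•(T'*T' − 1) ). Consequently the 3×3 block upper-triangular 9×9 matrices with diagonal blocks (T*T, 1, T'*T'), blocks (1,2), (1,3), (2,3) given respectively by the left-hand sides and by the right-hand sides, coincide. -/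
/-!
Since `J ^ 3 = 0`, `T = exp (h J)` and `T' = exp (-h J)` are truncated exponentials, and the
`sl₂` relation `⁅K, J⁆ = 2 J` gives `K exp (t J) = exp (t J) (K + 2 t J)`. Hence
`T H = T S K = ½ (T² + 1) K`, which is block (1,2). Commuting `K` through `T'² = exp (-2 h J)`
and using `exp (2 x) - 1 = (exp (2 x) + 1) x` (that is, `tanh x = x` modulo `x³`) gives
`T H T'² = ½ (T'² + 1) K + 2 (T'² - 1)`, which is block (2,3). Block (1,3) follows from these two
by expanding `(T H)² T'² = T H (T H T'²)`.
-/

open Matrix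

variable {𝕜 A : Type*} [Field 𝕜] [Ring A] [Algebra 𝕜 A]

/-- The exponential of `t • J`, exact when `J ^ 3 = 0`. -/
def truncExp (J : A) (t : 𝕜) : A := 1 + t • J + (t ^ 2 / 2) • (J * J)

section TruncExp

variable {J : A}

@[simp]
lemma truncExp_zero : truncExp J (0 : 𝕜) = 1 := by simp [truncExp]

lemma truncExp_add_truncExp_neg (t : 𝕜) :
    truncExp J t + truncExp J (-t) = (2 : 𝕜) • (1 + (t ^ 2 / 2) • (J * J)) := by
  simp only [truncExp, neg_sq]
  module

variable [CharZero 𝕜]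

lemma truncExp_mul_truncExp (hJ : J ^ 3 = 0) (s t : 𝕜) :
    truncExp J s * truncExp J t = truncExp J (s + t) := by
  have hJ' : J * (J * J) = 0 := by rw [← hJ]; noncomm_ring
  simp only [truncExp, mul_add, add_mul, smul_mul_smul_comm, one_mul, mul_one, mul_assoc, hJ',
    mul_zero, smul_zero, add_zero]
  module

lemma truncExp_two_mul_sub_one (hJ : J ^ 3 = 0) (t : 𝕜) :
    truncExp J (2 * t) - 1 = (truncExp J (2 * t) + 1) * (t • J) := by
  have hJ' : J * J * J = 0 := by rw [← hJ]; noncomm_ring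
  simp only [truncExp, add_mul, smul_mul_smul_comm, one_mul, hJ', smul_zero, add_zero]
  module

lemma mul_truncExp_of_lie_eq (hJ : J ^ 3 = 0) {K : A} (hKJ : ⁅K, J⁆ = 2 • J) (t : 𝕜) :
    K * truncExp J t = truncExp J t * (K + (2 * t) • J) := by
  have hJ' : J * (J * J) = 0 := by rw [← hJ]; noncomm_ring
  have hKJ' : K * J = J * K + 2 • J := by rw [← hKJ, Ring.lie_def]; abel
  have hKJJ : K * (J * J) = J * (J * K) + 4 • (J * J) := by
    rw [← mul_assoc, hKJ', add_mul, mul_assoc, hKJ']; noncomm_ring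
  simp only [truncExp, mul_add, add_mul, mul_smul_comm, smul_mul_assoc, one_mul, mul_one,
    mul_assoc, hJ', hKJ', hKJJ, smul_zero, add_zero, smul_add]
  module

end TruncExp

lemma jordanian_corner_block [CharZero 𝕜] (h : 𝕜) {T T' X K : A} (hTT' : T * T' = 1)
    (hT'T : T' * T = 1) (hX : (2 : 𝕜) • X = (T * T + 1) * K)
    (hXQ : (2 : 𝕜) • (X * (T' * T')) = (T' * T' + 1) * K + (4 : 𝕜) • (T' * T' - 1)) :
    (-(2 * h ^ 2)) • (T * T - T' * T' + (2 : 𝕜) • (X * (T' * T' - 1)) - X * X * (T' * T')) =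
      (h ^ 2 / 2) • ((T + T') * (T + T') * (K * K) - (4 : 𝕜) • (T * T - T' * T')
        + (4 : 𝕜) • ((T' * T' - 1) * K)) := by
  have hsq : (T + T') * (T + T') = T * T + T' * T' + 1 + 1 := by
    rw [add_mul, mul_add, mul_add, hTT', hT'T]; abel
  have hXXQ : (4 : 𝕜) • (X * X * (T' * T')) = (T + T') * (T + T') * (K * K)
      + (4 : 𝕜) • ((T' * T' - 1) * K) + (8 : 𝕜) • (X * (T' * T' - 1)) := calc
    (4 : 𝕜) • (X * X * (T' * T')) = (2 : 𝕜) • (X * ((2 : 𝕜) • (X * (T' * T')))) := by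
      rw [mul_smul_comm, smul_smul, mul_assoc]; norm_num
    _ = ((2 : 𝕜) • (X * (T' * T')) + (2 : 𝕜) • X) * K + (8 : 𝕜) • (X * (T' * T' - 1)) := by
      conv_lhs => rw [hXQ]
      simp only [mul_add, add_mul, smul_add, mul_smul_comm, smul_mul_assoc, mul_assoc, one_mul]
      module
    _ = _ := by
      rw [hXQ, hX, hsq]
      simp only [add_mul, smul_mul_assoc, mul_assoc, one_mul]
      module
  have hXXQ' : X * X * (T' * T') = (1 / 4 : 𝕜) • ((T + T') * (T + T') * (K * K)
      + (4 : 𝕜) • ((T' * T' - 1) * K) + (8 : 𝕜) • (X * (T' * T' - 1))) := by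
    rw [← hXXQ, smul_smul]; norm_num
  rw [hXXQ']
  module

theorem jordanian_R_blocks [CharZero 𝕜] (h : 𝕜) {J K S T T' H : A} (hJ : J ^ 3 = 0)
    (hKJ : ⁅K, J⁆ = 2 • J) (hS : S = 1 + (h ^ 2 / 2) • (J * J)) (hT : T = h • J + S)
    (hT' : T' = S - h • J) (hH : H = S * K) :
    T * T' = 1 ∧ T' * T = 1 ∧
    (-(2 * h)) • (T * H) = (-h) • ((T * T + 1) * K) ∧
    (-(2 * h ^ 2)) • (T * T - T' * T' + (2 : 𝕜) • ((T * H) * (T' * T' - 1))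
        - (T * H) * (T * H) * (T' * T')) =
      (h ^ 2 / 2) • ((T + T') * (T + T') * (K * K) - (4 : 𝕜) • (T * T - T' * T')
        + (4 : 𝕜) • ((T' * T' - 1) * K)) ∧
    (-(2 * h)) • ((T * H) * (T' * T') - T' * T' + 1) =
      (-h) • ((T' * T' + 1) * K + (2 : 𝕜) • (T' * T' - 1)) := by
  have hTe : T = truncExp J h := by rw [hT, hS, truncExp]; abel
  have hT'e : T' = truncExp J (-h) := by rw [hT', hS, truncExp, neg_sq, neg_smul]; abel
  have hTT' : T * T' = 1 := by
    rw [hTe, hT'e, truncExp_mul_truncExp hJ, add_neg_cancel, truncExp_zero]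
  have hT'T : T' * T = 1 := by
    rw [hTe, hT'e, truncExp_mul_truncExp hJ, neg_add_cancel, truncExp_zero]
  have hQ : T' * T' = truncExp J (2 * -h) := by rw [hT'e, truncExp_mul_truncExp hJ, two_mul]
  have hPQ : T * T * (T' * T') = 1 := by rw [mul_assoc, ← mul_assoc T T' T', hTT', one_mul, hTT']
  have hX : (2 : 𝕜) • (T * H) = (T * T + 1) * K := by
    rw [hH, ← mul_assoc, ← smul_mul_assoc, ← mul_smul_comm, hS, ← truncExp_add_truncExp_neg,
      ← hTe, ← hT'e, mul_add, hTT']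
  have hXQ : (2 : 𝕜) • (T * H * (T' * T')) = (T' * T' + 1) * K + (4 : 𝕜) • (T' * T' - 1) := calc
    (2 : 𝕜) • (T * H * (T' * T')) = (T * T + 1) * (K * (T' * T')) := by
      rw [← smul_mul_assoc, hX, mul_assoc]
    _ = (T' * T' + 1) * (K + (2 * (2 * -h)) • J) := by
      rw [hQ, mul_truncExp_of_lie_eq hJ hKJ, ← mul_assoc, ← hQ, add_mul, one_mul, hPQ, add_comm]
    _ = (T' * T' + 1) * K + (4 : 𝕜) • (T' * T' - 1) := by
      rw [hQ, truncExp_two_mul_sub_one hJ, mul_add, mul_smul_comm, mul_smul_comm, smul_smul]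
      ring_nf
  refine ⟨hTT', hT'T, ?_, jordanian_corner_block h hTT' hT'T hX hXQ, ?_⟩
  · rw [← hX, smul_smul]; ring_nf
  · have h23 : (2 : 𝕜) • (T * H * (T' * T') - T' * T' + 1)
        = (T' * T' + 1) * K + (2 : 𝕜) • (T' * T' - 1) := by
      rw [smul_add, smul_sub, hXQ]; module
    rw [show -(2 * h) = -h * 2 by ring, mul_smul, h23]

lemma spinOne_raising_pow_three_s6 {R : Type*} [Semiring R] :
    (!![0, 2, 0; 0, 0, 2; 0, 0, 0] : Matrix (Fin 3) (Fin 3) R) ^ 3 = 0 := by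
  ext i j; fin_cases i <;> fin_cases j <;> simp [pow_three]

lemma lie_spinOne_weight_raising {R : Type*} [Ring R] :
    ⁅(diagonal ![2, 0, -2] : Matrix (Fin 3) (Fin 3) R),
        (!![0, 2, 0; 0, 0, 2; 0, 0, 0] : Matrix (Fin 3) (Fin 3) R)⁆ =
      2 • !![0, 2, 0; 0, 0, 2; 0, 0, 0] := by
  ext i j; fin_cases i <;> fin_cases j <;> simp [Ring.lie_def, diagonal_fin_three]

/-- In the spin-1 representation, the matrix `R_h^{1;j}` read from the Jordanian universal
R-matrix (left-hand sides) coincides with the contracted matrix `R̃_h^{1;j}` (right-hand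
sides), block by block, together with the invertibility `T T' = 1 = T' T`. -/
theorem contracted_R_one_j_equals_Rh_one_j (h : ℝ)
    (J K S T T' H : Matrix (Fin 3) (Fin 3) ℝ)
    (hJ : J = !![0, 2, 0; 0, 0, 2; 0, 0, 0])
    (hK : K = Matrix.diagonal ![2, 0, -2])
    (hS : S = 1 + (h ^ 2 / 2) • (J * J))
    (hT : T = h • J + S)
    (hT' : T' = S - h • J)
    (hH : H = S * K) :
    T * T' = 1 ∧ T' * T = 1 ∧
    (-(2 * h)) • (T * H) = (-h) • ((T * T + 1) * K) ∧
    (-(2 * h ^ 2)) • (T * T - T' * T' + (2 : ℝ) • ((T * H) * (T' * T' - 1))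
        - (T * H) * (T * H) * (T' * T')) =
      (h ^ 2 / 2) • ((T + T') * (T + T') * (K * K) - (4 : ℝ) • (T * T - T' * T')
        + (4 : ℝ) • ((T' * T' - 1) * K)) ∧
    (-(2 * h)) • ((T * H) * (T' * T') - T' * T' + 1) =
      (-h) • ((T' * T' + 1) * K + (2 : ℝ) • (T' * T' - 1)) ∧
    (Matrix.of fun (p r : Fin 3 × Fin 3) =>
      (![![T * T,
          (-(2 * h)) • (T * H),
          (-(2 * h ^ 2)) • (T * T - T' * T' + (2 : ℝ) • ((T * H) * (T' * T' - 1))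
            - (T * H) * (T * H) * (T' * T'))],
        ![0, 1, (-(2 * h)) • ((T * H) * (T' * T') - T' * T' + 1)],
        ![0, 0, T' * T']] : Fin 3 → Fin 3 → Matrix (Fin 3) (Fin 3) ℝ) p.1 r.1 p.2 r.2) =
    (Matrix.of fun (p r : Fin 3 × Fin 3) =>
      (![![T * T,
          (-h) • ((T * T + 1) * K),
          (h ^ 2 / 2) • ((T + T') * (T + T') * (K * K) - (4 : ℝ) • (T * T - T' * T')
            + (4 : ℝ) • ((T' * T' - 1) * K))],
        ![0, 1, (-h) • ((T' * T' + 1) * K + (2 : ℝ) • (T' * T' - 1))],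
        ![0, 0, T' * T']] : Fin 3 → Fin 3 → Matrix (Fin 3) (Fin 3) ℝ) p.1 r.1 p.2 r.2) := by
  subst hJ hK
  obtain ⟨hTT', hT'T, h12, h13, h23⟩ :=
    jordanian_R_blocks h spinOne_raising_pow_three_s6 lie_spinOne_weight_raising hS hT hT' hH
  exact ⟨hTT', hT'T, h12, h13, h23, by rw [h12, h13, h23]⟩
end

section
/- Let h : ℝ. Define the real 4×4 matrices J := ![![0,3,0,0],![0,0,4,0],![0,0,0,3],![0,0,0,0]], K := diagonal (3,1,−1,−3), S := 1 + (h^2/2)•(J*J), T := h•J + S, T' := S − h•J, and H := S*K. Then T*T' = 1 = T'*T, and the following six matrix identities hold (writing K±c for K ± c•1): (A) (3/2)h•((T*T − 1 − 2•(T*H))*T) = −(3/2)h•( T^3*(K+1) + T*(K−1) ); (B) −(3/2)h^2•( 3•T^3 − 2•T − T' − 4•((T*H)*(T*T − 1 + T*H)*T') ) = (3/2)h^2•( T^3*((K−1)*(K+3)) + 2•(T*((K−1)*(K−1))) + T'*((K+1)*(K+1)) ); (C) −3h^3•( (15/4)•(T^3 − T'^3) − (9/4)•(T − T') − (9/2)•((T*H)*T)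 − 9•((T*H)*T') + (23/2)•((T*H)*T'^3) − 9•((T*H)*(T*H)*(T'^3 − T')) + 2•((T*H)*(T*H)*(T*H)*T'^3) ) = −(3/4)h^3•( T^3*((K−3)*(K+1)*(K+5)) + 3•(T*((K−3)*(K−1)*(K+1))) + 3•(T'*((K−3)*(K+1)*(K+1))) + T'^3*((K+1)*(K+3)*(K+5)) ); (D) −2h•((T*T − 1 + 2•(T*H))*T') = −2h•( T*(K−1) + T'*(K+1) ); (E) −(3/2)h^2•( 3•(T + 2•T' − 3•T'^3) − 4•((T*H)*(3•(T*T − 1) + T*H)*T'^3) ) = (3/2)h^2•( (T + 2•T')*((K−3)*(K+1)) + T'^3*((K+3)*(K+3)) ); (F) −(3/2)h•( (3•(T*T − 1) + 2•(T*H))*T'^3 ) = −(3/2)h•( T'*(K−3) + T'^3*(K+3) ). -/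
/-!
Since `J⁴ = 0`, the square root `(1 + h²J²)^{1/2}` is exactly `S = 1 + (h²/2) J²`, so `T`, `T'` and
`H` are explicit upper triangular matrices with entries polynomial in `h`; as `S` is even in `h`,
`T'` is `T` at `-h`. Each block, stripped of its scalar prefactor, is then a polynomial identity
in `h` between these matrices and the diagonal `K`, checked entry by entry.
-/

open Matrix

def jordanT (h : ℝ) : Matrix (Fin 4) (Fin 4) ℝ :=
  !![1, 3 * h, 6 * h ^ 2, 0; 0, 1, 4 * h, 6 * h ^ 2; 0, 0, 1, 3 * h; 0, 0, 0, 1]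

def jordanH (h : ℝ) : Matrix (Fin 4) (Fin 4) ℝ :=
  !![3, 0, -6 * h ^ 2, 0; 0, 1, 0, -18 * h ^ 2; 0, 0, -1, 0; 0, 0, 0, -3]

namespace Matrix

variable {α : Type*}

theorem diagonal_fin_four [Zero α] (d : Fin 4 → α) :
    diagonal d = !![d 0, 0, 0, 0; 0, d 1, 0, 0; 0, 0, d 2, 0; 0, 0, 0, d 3] := by
  ext i j
  fin_cases i <;> fin_cases j <;> rfl

theorem one_fin_four [Zero α] [One α] :
    (1 : Matrix (Fin 4) (Fin 4) α) = !![1, 0, 0, 0; 0, 1, 0, 0; 0, 0, 1, 0; 0, 0, 0, 1] := by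
  ext i j
  fin_cases i <;> fin_cases j <;> rfl

theorem ofNat_fin_four [AddMonoidWithOne α] (n : ℕ) [n.AtLeastTwo] :
    (ofNat(n) : Matrix (Fin 4) (Fin 4) α) =
      !![ofNat(n), 0, 0, 0; 0, ofNat(n), 0, 0; 0, 0, ofNat(n), 0; 0, 0, 0, ofNat(n)] := by
  ext i j
  fin_cases i <;> fin_cases j <;> rfl

end Matrix

section

variable (h : ℝ)

local notation "J" =>
  (!![0, 3, 0, 0; 0, 0, 4, 0; 0, 0, 0, 3; 0, 0, 0, 0] : Matrix (Fin 4) (Fin 4) ℝ)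
local notation "K" => (diagonal ![3, 1, -1, -3] : Matrix (Fin 4) (Fin 4) ℝ)
local notation "S" => (1 + (h ^ 2 / 2) • (J * J) : Matrix (Fin 4) (Fin 4) ℝ)
local notation "T" => jordanT h
local notation "T'" => jordanT (-h)
local notation "H" => jordanH h

theorem add_sqrt_eq_jordanT : h • J + S = T := by
  ext i j
  fin_cases i <;> fin_cases j <;> simp [jordanT, one_apply] <;> ring

theorem sqrt_sub_eq_jordanT_neg : S - h • J = T' := by
  simpa [neg_sq, sub_eq_neg_add] using add_sqrt_eq_jordanT (-h)

theorem sqrt_mul_eq_jordanH : S * K = H := by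
  ext i j
  fin_cases i <;> fin_cases j <;> simp [jordanH, mul_apply, Fin.sum_univ_four, one_apply] <;> ring

theorem jordanT_mul_jordanT_neg : T * T' = 1 := by
  ext i j
  fin_cases i <;> fin_cases j <;> simp [jordanT, mul_apply, Fin.sum_univ_four, one_apply] <;> ring

theorem jordanR_blockA_eq_contracted :
    (T * T - 1 - (2 : ℝ) • (T * H)) * T = -(T ^ 3 * (K + 1) + T * (K - 1)) := by
  simp [jordanT, jordanH, pow_three, diagonal_fin_four, one_fin_four]
  and_intros <;> ring

theorem jordanR_blockB_eq_contracted :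
    (3 : ℝ) • T ^ 3 - (2 : ℝ) • T - T' - (4 : ℝ) • ((T * H) * (T * T - 1 + T * H) * T') =
      -(T ^ 3 * ((K - 1) * (K + 3)) + (2 : ℝ) • (T * ((K - 1) * (K - 1)))
        + T' * ((K + 1) * (K + 1))) := by
  simp [jordanT, jordanH, pow_three, diagonal_fin_four, one_fin_four, ofNat_fin_four]
  and_intros <;> ring

theorem jordanR_blockC_eq_contracted :
    (15 / 4 : ℝ) • (T ^ 3 - T' ^ 3) - (9 / 4 : ℝ) • (T - T')
        - (9 / 2 : ℝ) • ((T * H) * T) - (9 : ℝ) • ((T * H) * T')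
        + (23 / 2 : ℝ) • ((T * H) * T' ^ 3)
        - (9 : ℝ) • ((T * H) * (T * H) * (T' ^ 3 - T'))
        + (2 : ℝ) • ((T * H) * (T * H) * (T * H) * T' ^ 3) =
      (1 / 4 : ℝ) • (T ^ 3 * ((K - 3) * (K + 1) * (K + 5))
        + (3 : ℝ) • (T * ((K - 3) * (K - 1) * (K + 1)))
        + (3 : ℝ) • (T' * ((K - 3) * (K + 1) * (K + 1)))
        + T' ^ 3 * ((K + 1) * (K + 3) * (K + 5))) := by
  simp [jordanT, jordanH, pow_three, diagonal_fin_four, one_fin_four, ofNat_fin_four]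
  and_intros <;> ring

theorem jordanR_blockD_eq_contracted :
    (T * T - 1 + (2 : ℝ) • (T * H)) * T' = T * (K - 1) + T' * (K + 1) := by
  simp [jordanT, jordanH, diagonal_fin_four, one_fin_four]
  and_intros <;> ring

theorem jordanR_blockE_eq_contracted :
    (3 : ℝ) • (T + (2 : ℝ) • T' - (3 : ℝ) • T' ^ 3)
        - (4 : ℝ) • ((T * H) * ((3 : ℝ) • (T * T - 1) + T * H) * T' ^ 3) =
      -((T + (2 : ℝ) • T') * ((K - 3) * (K + 1)) + T' ^ 3 * ((K + 3) * (K + 3))) := by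
  simp [jordanT, jordanH, pow_three, diagonal_fin_four, one_fin_four, ofNat_fin_four]
  and_intros <;> ring

theorem jordanR_blockF_eq_contracted :
    ((3 : ℝ) • (T * T - 1) + (2 : ℝ) • (T * H)) * T' ^ 3 = T' * (K - 3) + T' ^ 3 * (K + 3) := by
  simp [jordanT, jordanH, pow_three, diagonal_fin_four, one_fin_four, ofNat_fin_four]
  and_intros <;> ring

end

/-- In the spin-3/2 representation, the off-diagonal blocks of the matrix `R_h^{3/2;j}` read
from the Jordanian universal R-matrix (left-hand sides) coincide with the corresponding
blocks of the contracted matrix `R̃_h^{3/2;j}` (right-hand sides), together with the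
invertibility `T T' = 1 = T' T`. -/
theorem contracted_R_three_half_j_equals_Rh_three_half_j (h : ℝ)
    (J K S T T' H : Matrix (Fin 4) (Fin 4) ℝ)
    (hJ : J = !![0, 3, 0, 0; 0, 0, 4, 0; 0, 0, 0, 3; 0, 0, 0, 0])
    (hK : K = Matrix.diagonal ![3, 1, -1, -3])
    (hS : S = 1 + (h ^ 2 / 2) • (J * J))
    (hT : T = h • J + S)
    (hT' : T' = S - h • J)
    (hH : H = S * K) :
    T * T' = 1 ∧ T' * T = 1 ∧
    -- (A)
    ((3 / 2 * h) • ((T * T - 1 - (2 : ℝ) • (T * H)) * T) =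
      (-(3 / 2 * h)) • (T ^ 3 * (K + 1) + T * (K - 1))) ∧
    -- (B)
    ((-(3 / 2 * h ^ 2)) • ((3 : ℝ) • T ^ 3 - (2 : ℝ) • T - T'
        - (4 : ℝ) • ((T * H) * (T * T - 1 + T * H) * T')) =
      (3 / 2 * h ^ 2) • (T ^ 3 * ((K - 1) * (K + 3)) + (2 : ℝ) • (T * ((K - 1) * (K - 1)))
        + T' * ((K + 1) * (K + 1)))) ∧
    -- (C)
    ((-(3 * h ^ 3)) • ((15 / 4 : ℝ) • (T ^ 3 - T' ^ 3) - (9 / 4 : ℝ) • (T - T')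
        - (9 / 2 : ℝ) • ((T * H) * T) - (9 : ℝ) • ((T * H) * T')
        + (23 / 2 : ℝ) • ((T * H) * T' ^ 3)
        - (9 : ℝ) • ((T * H) * (T * H) * (T' ^ 3 - T'))
        + (2 : ℝ) • ((T * H) * (T * H) * (T * H) * T' ^ 3)) =
      (-(3 / 4 * h ^ 3)) • (T ^ 3 * ((K - 3) * (K + 1) * (K + 5))
        + (3 : ℝ) • (T * ((K - 3) * (K - 1) * (K + 1)))
        + (3 : ℝ) • (T' * ((K - 3) * (K + 1) * (K + 1)))
        + T' ^ 3 * ((K + 1) * (K + 3) * (K + 5)))) ∧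
    -- (D)
    ((-(2 * h)) • ((T * T - 1 + (2 : ℝ) • (T * H)) * T') =
      (-(2 * h)) • (T * (K - 1) + T' * (K + 1))) ∧
    -- (E)
    ((-(3 / 2 * h ^ 2)) • ((3 : ℝ) • (T + (2 : ℝ) • T' - (3 : ℝ) • T' ^ 3)
        - (4 : ℝ) • ((T * H) * ((3 : ℝ) • (T * T - 1) + T * H) * T' ^ 3)) =
      (3 / 2 * h ^ 2) • ((T + (2 : ℝ) • T') * ((K - 3) * (K + 1))
        + T' ^ 3 * ((K + 3) * (K + 3)))) ∧
    -- (F)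
    ((-(3 / 2 * h)) • (((3 : ℝ) • (T * T - 1) + (2 : ℝ) • (T * H)) * T' ^ 3) =
      (-(3 / 2 * h)) • (T' * (K - 3) + T' ^ 3 * (K + 3))) := by
  subst hJ hK hS
  obtain rfl : T = jordanT h := hT.trans (add_sqrt_eq_jordanT h)
  obtain rfl : T' = jordanT (-h) := hT'.trans (sqrt_sub_eq_jordanT_neg h)
  obtain rfl : H = jordanH h := hH.trans (sqrt_mul_eq_jordanH h)
  refine ⟨jordanT_mul_jordanT_neg h, by simpa using jordanT_mul_jordanT_neg (-h),
    ?_, ?_, ?_, ?_, ?_, ?_⟩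
  · rw [jordanR_blockA_eq_contracted, smul_neg, neg_smul]
  · rw [jordanR_blockB_eq_contracted, neg_smul_neg]
  · rw [jordanR_blockC_eq_contracted, smul_smul]
    congr 1
    ring
  · rw [jordanR_blockD_eq_contracted]
  · rw [jordanR_blockE_eq_contracted, neg_smul_neg]
  · rw [jordanR_blockF_eq_contracted]
end

section
/- Let 𝒜 be an associative unital algebra over a field K, let q, λ ∈ K be nonzero, and let â, b̂, ĉ, d̂ ∈ 𝒜 satisfy: â*b̂ = q⁻¹λ⁻¹•(b̂*â), â*ĉ = q⁻¹λ•(ĉ*â), b̂*d̂ = q⁻¹λ•(d̂*b̂), ĉ*d̂ = q⁻¹λ⁻¹•(d̂*ĉ), â*d̂ − d̂*â = (q⁻¹−q)λ⁻¹•(b̂*ĉ), and λ⁻¹•(b̂*ĉ) = λ•(ĉ*b̂). Set D̂ := â*d̂ − q⁻¹λ⁻¹•(b̂*ĉ). Then: â*D̂ = D̂*â, b̂*D̂ = λ^2•(D̂*b̂), ĉ*D̂ = λ⁻²•(D̂*ĉ), and d̂*D̂ = D̂*d̂. -/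
/-!
Call `x, y` `s`-commuting when `x * y = s • (y * x)`; this relation is multiplicative in each
argument. By the relation for `â d̂ - d̂ â`, the determinant also equals `d̂ â - q λ⁻¹ b̂ ĉ`.
In this form `b̂` and `ĉ` `s`-commute with both terms of `D̂`, with `s = λ²` and `s = λ⁻²`.
For `â` and `d̂` the two forms are mixed: `â (d̂ â) = (â d̂) â`, while `â` and `d̂` pass
through `b̂ ĉ` at the cost of `q⁻²`, which turns the coefficient `q λ⁻¹` into `q⁻¹ λ⁻¹`.
-/

def QCommute {R A : Type*} [SMul R A] [Mul A] (s : R) (x y : A) : Prop :=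
  x * y = s • (y * x)

namespace QCommute

section Semiring

variable {R A : Type*} [CommSemiring R] [Semiring A] [Algebra R A] {s t : R} {x y z : A}

theorem refl (x : A) : QCommute (1 : R) x x := (one_smul R _).symm

theorem mul_right (hy : QCommute s x y) (hz : QCommute t x z) : QCommute (s * t) x (y * z) := by
  unfold QCommute at *
  rw [← mul_assoc, hy, smul_mul_assoc, mul_assoc, hz, mul_smul_comm, smul_smul, mul_assoc]

theorem mul_left (hx : QCommute s x z) (hy : QCommute t y z) : QCommute (s * t) (x * y) z := by
  unfold QCommute at *
  rw [mul_assoc, hy, mul_smul_comm, ← mul_assoc, hx, smul_mul_assoc, smul_smul, mul_comm t,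
    mul_assoc]

theorem smul_right (h : QCommute s x y) (r : R) : QCommute s x (r • y) := by
  unfold QCommute at *
  rw [mul_smul_comm, h, smul_mul_assoc, smul_comm]

theorem congr_scalar (h : QCommute s x y) (hst : s = t) : QCommute t x y := hst ▸ h

end Semiring

theorem symm {R A : Type*} [Semifield R] [Semiring A] [Algebra R A] {s : R} {x y : A}
    (hs : s ≠ 0) (h : QCommute s x y) : QCommute s⁻¹ y x := by
  unfold QCommute at *
  rw [h, smul_smul, inv_mul_cancel₀ hs, one_smul]

section Ring

variable {R A : Type*} [CommSemiring R] [Ring A] [Algebra R A] {s : R} {x y z : A}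

theorem sub_right (hy : QCommute s x y) (hz : QCommute s x z) : QCommute s x (y - z) := by
  unfold QCommute at *
  rw [mul_sub, sub_mul, hy, hz, smul_sub]

theorem mul_sub_smul_eq (h : QCommute s x y) (z : A) (t : R) :
    x * (z * x - t • y) = (x * z - (t * s) • y) * x := by
  unfold QCommute at h
  rw [mul_sub, sub_mul, ← mul_assoc, mul_smul_comm, h, smul_smul, smul_mul_assoc]

end Ring

end QCommute

/-- The quantum determinant `D̂ = âd̂ − q⁻¹λ⁻¹ b̂ĉ` of the two-parametric standard quantum
group `Fun_{q,λ}(GL(2))` commutes with `â` and `d̂`, and `λ²`-commutes with `b̂` and `ĉ`. -/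
theorem quantum_determinant_commutation {K : Type*} [Field K] {A : Type*} [Ring A]
    [Algebra K A] (q lam : K) (hq : q ≠ 0) (hlam : lam ≠ 0) (a b c d D : A)
    (hab : a * b = (q⁻¹ * lam⁻¹) • (b * a))
    (hac : a * c = (q⁻¹ * lam) • (c * a))
    (hbd : b * d = (q⁻¹ * lam) • (d * b))
    (hcd : c * d = (q⁻¹ * lam⁻¹) • (d * c))
    (had : a * d - d * a = ((q⁻¹ - q) * lam⁻¹) • (b * c))
    (hbc : lam⁻¹ • (b * c) = lam • (c * b))
    (hD : D = a * d - (q⁻¹ * lam⁻¹) • (b * c)) :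
    a * D = D * a ∧
    b * D = lam ^ 2 • (D * b) ∧
    c * D = (lam⁻¹) ^ 2 • (D * c) ∧
    d * D = D * d := by
  have hD' : D = d * a - (q * lam⁻¹) • (b * c) := by
    rw [hD, sub_eq_iff_eq_add.mp had]
    match_scalars <;> ring
  have hbc' : QCommute (lam ^ 2) b c := by
    rw [QCommute, sq, mul_smul, ← inv_smul_eq_iff₀ hlam, hbc]
  refine ⟨?_, ?_, ?_, ?_⟩
  · have habc : QCommute (q⁻¹ ^ 2) a (b * c) :=
      (QCommute.mul_right hab hac).congr_scalar (by field_simp)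
    calc a * D = a * (d * a - (q * lam⁻¹) • (b * c)) := by rw [hD']
      _ = (a * d - (q⁻¹ * lam⁻¹) • (b * c)) * a := by
        rw [habc.mul_sub_smul_eq]
        congr 3
        field_simp
      _ = D * a := by rw [hD]
  · have hbda : QCommute (lam ^ 2) b (d * a) :=
      (QCommute.mul_right hbd (QCommute.symm (by simp [hq, hlam]) hab)).congr_scalar
        (by field_simp)
    have hbbc : QCommute (lam ^ 2) b (b * c) :=
      ((QCommute.refl b).mul_right hbc').congr_scalar (one_mul _)
    rw [hD']
    exact hbda.sub_right (hbbc.smul_right _)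
  · have hcb : QCommute (lam⁻¹ ^ 2) c b :=
      (hbc'.symm (pow_ne_zero 2 hlam)).congr_scalar (inv_pow _ _).symm
    have hcda : QCommute (lam⁻¹ ^ 2) c (d * a) :=
      (QCommute.mul_right hcd (QCommute.symm (by simp [hq, hlam]) hac)).congr_scalar
        (by field_simp)
    have hcbc : QCommute (lam⁻¹ ^ 2) c (b * c) :=
      (hcb.mul_right (QCommute.refl c)).congr_scalar (mul_one _)
    rw [hD']
    exact hcda.sub_right (hcbc.smul_right _)
  · have hdbc : QCommute (q ^ 2) d (b * c) :=
      ((QCommute.mul_left hbd hcd).symm (by simp [hq, hlam])).congr_scalar (by field_simp)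
    calc d * D = d * (a * d - (q⁻¹ * lam⁻¹) • (b * c)) := by rw [hD]
      _ = (d * a - (q * lam⁻¹) • (b * c)) * d := by
        rw [hdbc.mul_sub_smul_eq]
        congr 3
        field_simp
      _ = D * d := by rw [hD']
end

section
/- Let 𝒜 be an associative unital algebra over a field K, let q, λ ∈ K be nonzero, let η ∈ K, and let â, b̂, ĉ, d̂ ∈ 𝒜 satisfy the Fun_{q,λ}(GL(2)) relations: â*b̂ = q⁻¹λ⁻¹•(b̂*â), â*ĉ = q⁻¹λ•(ĉ*â), b̂*d̂ = q⁻¹λ•(d̂*b̂), ĉ*d̂ = q⁻¹λ⁻¹•(d̂*ĉ), â*d̂ − d̂*â = (q⁻¹−q)λ⁻¹•(b̂*ĉ), λ⁻¹•(b̂*ĉ) = λ•(ĉ*b̂). Define ã := â − η•ĉ, b̃ := b̂ + η•(â − d̂) − η^2•ĉ, c̃ := ĉ, d̃ := d̂ + η•ĉ, and D̃ := ã*d̃ − q⁻¹λ⁻¹•(b̃*c̃) − η(1 − q⁻¹λ⁻¹)•(ã*c̃). Then: (1) ã*b̃ − q⁻¹λ⁻¹•(b̃*ã) = η(1 − q⁻¹λ⁻¹)•(ã*ã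 − D̃); (2) ã*c̃ − q⁻¹λ•(c̃*ã) = −η(1 − q⁻¹λ)•(c̃*c̃); (3) b̃*d̃ − q⁻¹λ•(d̃*b̃) = −η(1 − q⁻¹λ)•(d̃*d̃ − D̃); (4) c̃*d̃ − q⁻¹λ⁻¹•(d̃*c̃) = η(1 − q⁻¹λ⁻¹)•(c̃*c̃); (5) ã*d̃ − d̃*ã = η(1 − q⁻¹λ⁻¹)•(ã*c̃) − η(qλ⁻¹ − 1)•(d̃*c̃) + (q⁻¹−q)λ⁻¹•(b̃*c̃); (6) λ⁻¹•(b̃*c̃) − λ•(c̃*b̃) = −η(q − λ⁻¹)•(ã*c̃) − η(q − λ)•(c̃*d̃). -/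
/-!
The substitution `â = ã + ηc̃`, `b̂ = b̃ − η(ã − d̃) − η²c̃`, `ĉ = c̃`, `d̂ = d̃ − ηc̃` is the
conjugation `T̂ = g⁻¹ T̃ g` of the generator matrix by `g = [[1, -η], [0, 1]]`. Being linear, it
keeps every relation homogeneous quadratic, and each transformed relation turns out to be a
scalar combination of the original six; the coefficients match only after using `q q⁻¹ = 1`
and `λ λ⁻¹ = 1`.
-/

structure FunQLambdaGL2Relations {K : Type*} [Field K] {A : Type*} [Ring A] [Algebra K A]
    (q lam : K) (a b c d : A) : Prop where
  ab : a * b = (q⁻¹ * lam⁻¹) • (b * a)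
  ac : a * c = (q⁻¹ * lam) • (c * a)
  bd : b * d = (q⁻¹ * lam) • (d * b)
  cd : c * d = (q⁻¹ * lam⁻¹) • (d * c)
  ad : a * d - d * a = ((q⁻¹ - q) * lam⁻¹) • (b * c)
  bc : lam⁻¹ • (b * c) = lam • (c * b)

def contractedDet {K : Type*} [Field K] {A : Type*} [Ring A] [Algebra K A]
    (q lam η : K) (a b c d : A) : A :=
  a * d - (q⁻¹ * lam⁻¹) • (b * c) - (η * (1 - q⁻¹ * lam⁻¹)) • (a * c)

namespace FunQLambdaGL2Relations

variable {K : Type*} [Field K] {A : Type*} [Ring A] [Algebra K A] {q lam η : K} {a b c d : A}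
  (h : FunQLambdaGL2Relations q lam (a + η • c) (b - η • (a - d) - η ^ 2 • c) c (d - η • c))
include h

theorem contracted_ab (hq : q ≠ 0) (hlam : lam ≠ 0) :
    a * b - (q⁻¹ * lam⁻¹) • (b * a) =
      (η * (1 - q⁻¹ * lam⁻¹)) • (a * a - contractedDet q lam η a b c d) := by
  linear_combination (norm := skip)
    h.ab - (η * q⁻¹ * lam⁻¹) • h.ad + (η * lam⁻¹) • h.bc + (η ^ 2 * q⁻¹ * lam⁻¹) • h.cd
  simp only [contractedDet, mul_add, add_mul, mul_sub, sub_mul, smul_mul_assoc, mul_smul_comm]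
  match_scalars <;> field_simp <;> ring

theorem contracted_ac :
    a * c - (q⁻¹ * lam) • (c * a) = (-(η * (1 - q⁻¹ * lam))) • (c * c) := by
  linear_combination (norm := skip) h.ac
  simp only [mul_add, add_mul, mul_sub, smul_mul_assoc, mul_smul_comm]
  module

theorem contracted_bd (hq : q ≠ 0) (hlam : lam ≠ 0) :
    b * d - (q⁻¹ * lam) • (d * b) =
      (-(η * (1 - q⁻¹ * lam))) • (d * d - contractedDet q lam η a b c d) := by
  linear_combination (norm := skip)
    h.bd + (η * q⁻¹ * lam) • h.ad + (η * q⁻¹) • h.bc + η ^ 2 • h.ac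
      + (η ^ 2 * (1 - q⁻¹ * lam)) • h.cd
  simp only [contractedDet, mul_add, add_mul, mul_sub, sub_mul, smul_mul_assoc, mul_smul_comm]
  match_scalars <;> field_simp <;> ring

theorem contracted_cd :
    c * d - (q⁻¹ * lam⁻¹) • (d * c) = (η * (1 - q⁻¹ * lam⁻¹)) • (c * c) := by
  linear_combination (norm := skip) h.cd
  simp only [mul_sub, sub_mul, smul_mul_assoc, mul_smul_comm]
  module

theorem contracted_ad (hq : q ≠ 0) (hlam : lam ≠ 0) :
    a * d - d * a = (η * (1 - q⁻¹ * lam⁻¹)) • (a * c) - (η * (q * lam⁻¹ - 1)) • (d * c)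
      + ((q⁻¹ - q) * lam⁻¹) • (b * c) := by
  linear_combination (norm := skip) h.ad + (η * q * lam⁻¹) • h.ac - η • h.cd
  simp only [mul_add, add_mul, mul_sub, sub_mul, smul_mul_assoc, mul_smul_comm]
  match_scalars <;> field_simp <;> ring

theorem contracted_bc (hq : q ≠ 0) :
    lam⁻¹ • (b * c) - lam • (c * b) =
      (-(η * (q - lam⁻¹))) • (a * c) - (η * (q - lam)) • (c * d) := by
  linear_combination (norm := skip) h.bc + (η * q) • (h.ac + h.cd)
  simp only [mul_add, add_mul, mul_sub, sub_mul, smul_mul_assoc, mul_smul_comm]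
  match_scalars <;> field_simp <;> ring

end FunQLambdaGL2Relations

/-- Under the contraction change of basis `â = ã + ηc̃`, `b̂ = b̃ − η(ã−d̃) − η²c̃`, `ĉ = c̃`,
`d̂ = d̃ − ηc̃`, the defining relations of `Fun_{q,λ}(GL(2))` become the transformed
relations listed in the conclusion, with transformed determinant
`D̃ = ãd̃ − q⁻¹λ⁻¹ b̃c̃ − η(1 − q⁻¹λ⁻¹) ãc̃`. -/
theorem contracted_Fun_q_lambda_relations {K : Type*} [Field K] {A : Type*} [Ring A]
    [Algebra K A] (q lam η : K) (hq : q ≠ 0) (hlam : lam ≠ 0) (a b c d ta tb tc td Dt : A)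
    (hab : a * b = (q⁻¹ * lam⁻¹) • (b * a))
    (hac : a * c = (q⁻¹ * lam) • (c * a))
    (hbd : b * d = (q⁻¹ * lam) • (d * b))
    (hcd : c * d = (q⁻¹ * lam⁻¹) • (d * c))
    (had : a * d - d * a = ((q⁻¹ - q) * lam⁻¹) • (b * c))
    (hbc : lam⁻¹ • (b * c) = lam • (c * b))
    (hta : ta = a - η • c)
    (htb : tb = b + η • (a - d) - η ^ 2 • c)
    (htc : tc = c)
    (htd : td = d + η • c)
    (hDt : Dt = ta * td - (q⁻¹ * lam⁻¹) • (tb * tc) - (η * (1 - q⁻¹ * lam⁻¹)) • (ta * tc)) :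
    ta * tb - (q⁻¹ * lam⁻¹) • (tb * ta) = (η * (1 - q⁻¹ * lam⁻¹)) • (ta * ta - Dt) ∧
    ta * tc - (q⁻¹ * lam) • (tc * ta) = (-(η * (1 - q⁻¹ * lam))) • (tc * tc) ∧
    tb * td - (q⁻¹ * lam) • (td * tb) = (-(η * (1 - q⁻¹ * lam))) • (td * td - Dt) ∧
    tc * td - (q⁻¹ * lam⁻¹) • (td * tc) = (η * (1 - q⁻¹ * lam⁻¹)) • (tc * tc) ∧
    ta * td - td * ta = (η * (1 - q⁻¹ * lam⁻¹)) • (ta * tc) - (η * (q * lam⁻¹ - 1)) • (td * tc)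
      + ((q⁻¹ - q) * lam⁻¹) • (tb * tc) ∧
    lam⁻¹ • (tb * tc) - lam • (tc * tb) =
      (-(η * (q - lam⁻¹))) • (ta * tc) - (η * (q - lam)) • (tc * td) := by
  have h : FunQLambdaGL2Relations q lam
      (ta + η • tc) (tb - η • (ta - td) - η ^ 2 • tc) tc (td - η • tc) := by
    have ha : ta + η • tc = a := by rw [hta, htc]; module
    have hb : tb - η • (ta - td) - η ^ 2 • tc = b := by rw [hta, htb, htc, htd]; module
    have hd : td - η • tc = d := by rw [htc, htd]; module
    rw [ha, hb, hd, htc]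
    exact ⟨hab, hac, hbd, hcd, had, hbc⟩
  subst hDt
  exact ⟨h.contracted_ab hq hlam, h.contracted_ac, h.contracted_bd hq hlam, h.contracted_cd,
    h.contracted_ad hq hlam, h.contracted_bc hq⟩
end

section
/- Under the same hypotheses and definitions as follows — 𝒜 an associative unital algebra over a field K, q, λ ∈ K nonzero, η ∈ K, and â, b̂, ĉ, d̂ ∈ 𝒜 satisfying â*b̂ = q⁻¹λ⁻¹•(b̂*â), â*ĉ = q⁻¹λ•(ĉ*â), b̂*d̂ = q⁻¹λ•(d̂*b̂), ĉ*d̂ = q⁻¹λ⁻¹•(d̂*ĉ), â*d̂ − d̂*â = (q⁻¹−q)λ⁻¹•(b̂*ĉ), λ⁻¹•(b̂*ĉ) = λ•(ĉ*b̂); with ã := â − η•ĉ, b̃ := b̂ + η•(â − d̂) − η^2•ĉ, c̃ := ĉ, d̃ := d̂ + η•ĉ, and D̃ := ã*d̃ − q⁻¹λ⁻¹•(b̃*c̃) − η(1 − q⁻¹λ⁻¹)•(ã*c̃) — the following hold: (1) ã*D̃ − D̃*ã = η(λ^2 − 1)•(c̃*D̃); (2) b̃*D̃ − λ^2•(D̃*b̃)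 = η(λ^2 − 1)•(D̃*d̃ − ã*D̃); (3) c̃*D̃ − λ⁻²•(D̃*c̃) = 0; (4) d̃*D̃ − D̃*d̃ = −η(λ^2 − 1)•(c̃*D̃). -/
/-!
The η-terms of `D̃` cancel by `ĉd̂ = q⁻¹λ⁻¹ d̂ĉ`, so `D̃` is the ordinary quantum determinant
`D = âd̂ − q⁻¹λ⁻¹ b̂ĉ`. For two parameters `D` is not central, but it commutes with `â` and `d̂`
while `b̂D = λ²Db̂` and `ĉD = λ⁻²Dĉ`; the four relations are these, rewritten in the contracted
generators.
-/

section

variable {K : Type*} [Field K] {A : Type*} [Ring A] [Algebra K A]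

def quantumDet (q lam : K) (a b c d : A) : A := a * d - (q⁻¹ * lam⁻¹) • (b * c)

structure IsFunGL2 (q lam : K) (a b c d : A) : Prop where
  ab : a * b = (q⁻¹ * lam⁻¹) • (b * a)
  ac : a * c = (q⁻¹ * lam) • (c * a)
  bd : b * d = (q⁻¹ * lam) • (d * b)
  cd : c * d = (q⁻¹ * lam⁻¹) • (d * c)
  ad_sub_da : a * d - d * a = ((q⁻¹ - q) * lam⁻¹) • (b * c)
  bc : lam⁻¹ • (b * c) = lam • (c * b)

theorem mul_swap_of_mul_eq_smul {k : K} (hk : k ≠ 0) {x y : A} (h : x * y = k • (y * x)) :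
    y * x = k⁻¹ • (x * y) :=
  (eq_inv_smul_iff₀ hk).2 h.symm

namespace IsFunGL2

variable {q lam : K} {a b c d : A}

theorem ba (h : IsFunGL2 q lam a b c d) (hq : q ≠ 0) (hlam : lam ≠ 0) :
    b * a = (q * lam) • (a * b) := by
  simpa [mul_comm] using mul_swap_of_mul_eq_smul (by positivity) h.ab

theorem ca (h : IsFunGL2 q lam a b c d) (hq : q ≠ 0) (hlam : lam ≠ 0) :
    c * a = (q * lam⁻¹) • (a * c) := by
  simpa [mul_comm] using mul_swap_of_mul_eq_smul (by positivity) h.ac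

theorem db (h : IsFunGL2 q lam a b c d) (hq : q ≠ 0) (hlam : lam ≠ 0) :
    d * b = (q * lam⁻¹) • (b * d) := by
  simpa [mul_comm] using mul_swap_of_mul_eq_smul (by positivity) h.bd

theorem dc (h : IsFunGL2 q lam a b c d) (hq : q ≠ 0) (hlam : lam ≠ 0) :
    d * c = (q * lam) • (c * d) := by
  simpa [mul_comm] using mul_swap_of_mul_eq_smul (by positivity) h.cd

theorem cb (h : IsFunGL2 q lam a b c d) (hlam : lam ≠ 0) :
    c * b = (lam⁻¹) ^ 2 • (b * c) := by
  rw [sq, mul_smul, h.bc, inv_smul_smul₀ hlam]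

theorem da (h : IsFunGL2 q lam a b c d) :
    d * a = a * d - ((q⁻¹ - q) * lam⁻¹) • (b * c) := by
  rw [← h.ad_sub_da, sub_sub_cancel]

theorem commute_quantumDet_a (h : IsFunGL2 q lam a b c d) (hq : q ≠ 0) (hlam : lam ≠ 0) :
    Commute a (quantumDet q lam a b c d) := by
  have hbca : b * c * a = q ^ 2 • (a * b * c) := by
    rw [mul_assoc, h.ca hq hlam, mul_smul_comm, ← mul_assoc, h.ba hq hlam, smul_mul_assoc,
      smul_smul, mul_mul_mul_comm, inv_mul_cancel₀ hlam, mul_one, sq]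
  have hada : a * d * a = a * (a * d) - ((q⁻¹ - q) * lam⁻¹) • (a * (b * c)) := by
    rw [mul_assoc, h.da, mul_sub, mul_smul_comm]
  rw [Commute, SemiconjBy, quantumDet, mul_sub, sub_mul, mul_smul_comm, smul_mul_assoc, hbca, hada]
  simp only [mul_assoc, smul_smul]
  match_scalars <;> field_simp
  ring

theorem commute_quantumDet_d (h : IsFunGL2 q lam a b c d) (hq : q ≠ 0) (hlam : lam ≠ 0) :
    Commute d (quantumDet q lam a b c d) := by
  have hdbc : d * b * c = q ^ 2 • (b * c * d) := by
    rw [h.db hq hlam, smul_mul_assoc, mul_assoc, h.dc hq hlam, mul_smul_comm,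
      smul_smul, mul_mul_mul_comm, inv_mul_cancel₀ hlam, mul_one, sq, mul_assoc]
  have hdad : d * a * d = a * d * d - ((q⁻¹ - q) * lam⁻¹) • (b * c * d) := by
    rw [h.da, sub_mul, smul_mul_assoc]
  rw [Commute, SemiconjBy, quantumDet, mul_sub, sub_mul, mul_smul_comm, smul_mul_assoc,
    ← mul_assoc, ← mul_assoc, hdbc, hdad]
  simp only [mul_assoc, smul_smul]
  match_scalars <;> field_simp
  ring

theorem b_mul_quantumDet (h : IsFunGL2 q lam a b c d) (hq : q ≠ 0) (hlam : lam ≠ 0) :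
    b * quantumDet q lam a b c d = lam ^ 2 • (quantumDet q lam a b c d * b) := by
  have hbad : b * a * d = lam ^ 2 • (a * d * b) := by
    rw [h.ba hq hlam, smul_mul_assoc, mul_assoc, h.bd, mul_smul_comm, smul_smul, ← mul_assoc a]
    congr 1; field_simp
  have hbcb : b * c * b = (lam⁻¹) ^ 2 • (b * b * c) := by
    rw [mul_assoc, h.cb hlam, mul_smul_comm, ← mul_assoc]
  rw [quantumDet, mul_sub, sub_mul, mul_smul_comm, smul_mul_assoc, ← mul_assoc, ← mul_assoc,
    hbad, hbcb]
  simp only [mul_assoc, smul_sub, smul_smul]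
  match_scalars <;> field_simp

theorem c_mul_quantumDet (h : IsFunGL2 q lam a b c d) (hq : q ≠ 0) (hlam : lam ≠ 0) :
    c * quantumDet q lam a b c d = (lam⁻¹) ^ 2 • (quantumDet q lam a b c d * c) := by
  have hcad : c * a * d = (lam⁻¹) ^ 2 • (a * d * c) := by
    rw [h.ca hq hlam, smul_mul_assoc, mul_assoc, h.cd, mul_smul_comm, smul_smul, ← mul_assoc a]
    congr 1; field_simp
  have hcbc : c * b * c = (lam⁻¹) ^ 2 • (b * c * c) := by
    rw [h.cb hlam, smul_mul_assoc]
  rw [quantumDet, mul_sub, sub_mul, mul_smul_comm, smul_mul_assoc, ← mul_assoc, ← mul_assoc,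
    hcad, hcbc]
  simp only [mul_assoc, smul_sub, smul_smul]
  match_scalars <;> ring

end IsFunGL2

theorem contracted_quantumDet_eq {q lam : K} {a b c d : A}
    (hcd : c * d = (q⁻¹ * lam⁻¹) • (d * c)) (η : K) :
    (a - η • c) * (d + η • c) - (q⁻¹ * lam⁻¹) • ((b + η • (a - d) - η ^ 2 • c) * c)
      - (η * (1 - q⁻¹ * lam⁻¹)) • ((a - η • c) * c) = quantumDet q lam a b c d := by
  simp only [quantumDet, mul_sub, sub_mul, mul_add, add_mul, smul_mul_assoc, mul_smul_comm,
    smul_sub, smul_add, hcd]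
  module

theorem contracted_commutation {lam : K} (hlam : lam ≠ 0) (η : K) {a b c d D : A}
    (ha : Commute a D) (hb : b * D = lam ^ 2 • (D * b)) (hc : c * D = (lam⁻¹) ^ 2 • (D * c))
    (hd : Commute d D) :
    (a - η • c) * D - D * (a - η • c) = (η * (lam ^ 2 - 1)) • (c * D) ∧
    (b + η • (a - d) - η ^ 2 • c) * D - lam ^ 2 • (D * (b + η • (a - d) - η ^ 2 • c)) =
      (η * (lam ^ 2 - 1)) • (D * (d + η • c) - (a - η • c) * D) ∧
    c * D - (lam⁻¹) ^ 2 • (D * c) = 0 ∧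
    (d + η • c) * D - D * (d + η • c) = (-(η * (lam ^ 2 - 1))) • (c * D) := by
  have hc' : D * c = lam ^ 2 • (c * D) := by
    rw [hc, smul_smul, ← mul_pow, mul_inv_cancel₀ hlam, one_pow, one_smul]
  refine ⟨?_, ?_, sub_eq_zero.2 hc, ?_⟩ <;>
  · simp only [mul_sub, sub_mul, mul_add, add_mul, smul_mul_assoc, mul_smul_comm, smul_sub,
      smul_add, ha.eq, hb, hd.eq, hc']
    module

end

/-- The transformed quantum determinant
`D̃ = ãd̃ − q⁻¹λ⁻¹ b̃c̃ − η(1 − q⁻¹λ⁻¹) ãc̃` of the contracted `Fun_{q,λ}(GL(2))` algebra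
satisfies the stated commutation relations with the transformed generators. -/
theorem contracted_determinant_commutation {K : Type*} [Field K] {A : Type*} [Ring A]
    [Algebra K A] (q lam η : K) (hq : q ≠ 0) (hlam : lam ≠ 0) (a b c d ta tb tc td Dt : A)
    (hab : a * b = (q⁻¹ * lam⁻¹) • (b * a))
    (hac : a * c = (q⁻¹ * lam) • (c * a))
    (hbd : b * d = (q⁻¹ * lam) • (d * b))
    (hcd : c * d = (q⁻¹ * lam⁻¹) • (d * c))
    (had : a * d - d * a = ((q⁻¹ - q) * lam⁻¹) • (b * c))
    (hbc : lam⁻¹ • (b * c) = lam • (c * b))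
    (hta : ta = a - η • c)
    (htb : tb = b + η • (a - d) - η ^ 2 • c)
    (htc : tc = c)
    (htd : td = d + η • c)
    (hDt : Dt = ta * td - (q⁻¹ * lam⁻¹) • (tb * tc) - (η * (1 - q⁻¹ * lam⁻¹)) • (ta * tc)) :
    ta * Dt - Dt * ta = (η * (lam ^ 2 - 1)) • (tc * Dt) ∧
    tb * Dt - lam ^ 2 • (Dt * tb) = (η * (lam ^ 2 - 1)) • (Dt * td - ta * Dt) ∧
    tc * Dt - (lam⁻¹) ^ 2 • (Dt * tc) = 0 ∧
    td * Dt - Dt * td = (-(η * (lam ^ 2 - 1))) • (tc * Dt) := by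
  have h : IsFunGL2 q lam a b c d := ⟨hab, hac, hbd, hcd, had, hbc⟩
  subst hta htb htc htd hDt
  rw [contracted_quantumDet_eq hcd η]
  exact contracted_commutation hlam η (h.commute_quantumDet_a hq hlam)
    (h.b_mul_quantumDet hq hlam) (h.c_mul_quantumDet hq hlam) (h.commute_quantumDet_d hq hlam)
end

section
/- Let 𝒜 be an associative unital ℝ-algebra, h, α : ℝ, and a, b, c, d ∈ 𝒜 with D := a*d − b*c − h(1+α)•(a*c). Assume the Fun_{h,α}(GL(2)) relations: a*b − b*a = h(1+α)•(a*a − D); a*c − c*a = −h(1−α)•(c*c); b*d − d*b = −h(1−α)•(d*d − D); c*d − d*c = h(1+α)•(c*c); a*d − d*a = h(1+α)•(a*c) − h(1−α)•(d*c); b*c − c*b = −h(1+α)•(a*c) − h(1−α)•(c*d); together with the determinant relations a*D − D*a = 2hα•(c*D), b*D − D*b = 2hα•(D*d − a*D), c*D = D*c, d*D − D*d = −2hα•(c*D). Set a' := d, b' := b, c' := c, d' := a, and D' := a'*d' − b'*c' − h(1−α)•(a'*c'). Then D' = D, and (a', b', c', d') satisfy the Fun_{h,−α}(GL(2)) relations,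 i.e. all of the above relations with α replaced by −α and (a,b,c,d,D) replaced by (a',b',c',d',D'). -/
section

variable {R A : Type*} [CommRing R] [Ring A] [Module R A]

structure FunHAlphaRelations (h α : R) (a b c d D : A) : Prop where
  det : D = a * d - b * c - (h * (1 + α)) • (a * c)
  ab : a * b - b * a = (h * (1 + α)) • (a * a - D)
  ac : a * c - c * a = (-(h * (1 - α))) • (c * c)
  bd : b * d - d * b = (-(h * (1 - α))) • (d * d - D)
  cd : c * d - d * c = (h * (1 + α)) • (c * c)
  ad : a * d - d * a = (h * (1 + α)) • (a * c) - (h * (1 - α)) • (d * c)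
  bc : b * c - c * b = (-(h * (1 + α))) • (a * c) - (h * (1 - α)) • (c * d)
  aD : a * D - D * a = (2 * h * α) • (c * D)
  bD : b * D - D * b = (2 * h * α) • (D * d - a * D)
  cD : c * D = D * c
  dD : d * D - D * d = (-(2 * h * α)) • (c * D)

namespace FunHAlphaRelations

variable {h α : R} {a b c d D : A}

theorem swap_ad (r : FunHAlphaRelations h α a b c d D) :
    FunHAlphaRelations h (-α) d b c a D where
  -- the relation `ad` identifies the two quantum determinants
  det := by linear_combination (norm := module) r.det + r.ad
  ab := by linear_combination (norm := module) -r.bd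
  ac := by linear_combination (norm := module) -r.cd
  bd := by linear_combination (norm := module) -r.ab
  cd := by linear_combination (norm := module) -r.ac
  ad := by linear_combination (norm := module) -r.ad
  bc := by
    linear_combination (norm := module) r.bc - (h * (1 + α)) • r.ac - (h * (1 - α)) • r.cd
  aD := by linear_combination (norm := module) r.dD
  bD := by
    linear_combination (norm := module) r.bD - (2 * h * α) • r.dD - (2 * h * α) • r.aD
  cD := r.cD
  dD := by linear_combination (norm := module) r.aD

end FunHAlphaRelations

end

/-- The map `ρ(a) = d, ρ(b) = b, ρ(c) = c, ρ(d) = a` is an automorphism of the defining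
relations of the Jordanian quantum group `Fun_{h,α}(GL(2))`, provided the deformation
parameters are redefined by `h → h`, `α → −α`; moreover it preserves the quantum
determinant. -/
theorem Fun_h_alpha_automorphism {A : Type*} [Ring A] [Algebra ℝ A] (h α : ℝ)
    (a b c d D : A) (hD : D = a * d - b * c - (h * (1 + α)) • (a * c))
    (hab : a * b - b * a = (h * (1 + α)) • (a * a - D))
    (hac : a * c - c * a = (-(h * (1 - α))) • (c * c))
    (hbd : b * d - d * b = (-(h * (1 - α))) • (d * d - D))
    (hcd : c * d - d * c = (h * (1 + α)) • (c * c))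
    (had : a * d - d * a = (h * (1 + α)) • (a * c) - (h * (1 - α)) • (d * c))
    (hbc : b * c - c * b = (-(h * (1 + α))) • (a * c) - (h * (1 - α)) • (c * d))
    (haD : a * D - D * a = (2 * h * α) • (c * D))
    (hbD : b * D - D * b = (2 * h * α) • (D * d - a * D))
    (hcD : c * D = D * c)
    (hdD : d * D - D * d = (-(2 * h * α)) • (c * D))
    (a' b' c' d' D' : A)
    (ha' : a' = d) (hb' : b' = b) (hc' : c' = c) (hd' : d' = a)
    (hD' : D' = a' * d' - b' * c' - (h * (1 - α)) • (a' * c')) :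
    D' = D ∧
    a' * b' - b' * a' = (h * (1 + -α)) • (a' * a' - D') ∧
    a' * c' - c' * a' = (-(h * (1 - -α))) • (c' * c') ∧
    b' * d' - d' * b' = (-(h * (1 - -α))) • (d' * d' - D') ∧
    c' * d' - d' * c' = (h * (1 + -α)) • (c' * c') ∧
    a' * d' - d' * a' = (h * (1 + -α)) • (a' * c') - (h * (1 - -α)) • (d' * c') ∧
    b' * c' - c' * b' = (-(h * (1 + -α))) • (a' * c') - (h * (1 - -α)) • (c' * d') ∧
    a' * D' - D' * a' = (2 * h * -α) • (c' * D') ∧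
    b' * D' - D' * b' = (2 * h * -α) • (D' * d' - a' * D') ∧
    c' * D' = D' * c' ∧
    d' * D' - D' * d' = (-(2 * h * -α)) • (c' * D') := by
  subst ha' hb' hc' hd'
  have r' := FunHAlphaRelations.swap_ad
    ⟨hD, hab, hac, hbd, hcd, had, hbc, haD, hbD, hcD, hdD⟩
  obtain rfl : D' = D := by rw [hD', r'.det, sub_eq_add_neg 1 α]
  exact ⟨rfl, r'.ab, r'.ac, r'.bd, r'.cd, r'.ad, r'.bc, r'.aD, r'.bD, r'.cD, r'.dD⟩
end
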